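/- arXiv:1310.0337 — 7 statements merged into one kernel-verified Lean document; each statement's English description precedes it below -/
import Mathlib

section
/- For positive integers r and s, gcd(2^r - 1, 2^s + 1) equals 1 if r/gcd(r,s) is odd, and equals 2^gcd(r,s) + 1 if r/gcd(r,s) is even. -/
/-! With `d = gcd r s`, every common divisor `g` of `2^r - 1` and `2^s + 1` divides
`2^(2s) - 1 = (2^s - 1)(2^s + 1)`, hence `2^gcd(r, 2s) - 1`, where `gcd(r, 2s)` is `d` or `2d`
according as `r / d` is odd or even. Since `2^s - 1` and `2^s + 1` are odd and differ by `2`,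
`g` is coprime to `2^d - 1 ∣ 2^s - 1`. So `g = 1` in the odd case, and `g ∣ 2^d + 1` in the even
case; there `s / d` is odd, so `2^d + 1` divides both `2^s + 1` and `2^(2d) - 1 ∣ 2^r - 1`. -/

namespace Nat

theorem pow_two_mul_sub_one (a n : ℕ) : a ^ (2 * n) - 1 = (a ^ n + 1) * (a ^ n - 1) := by
  rw [mul_comm, pow_mul, ← Nat.sq_sub_sq, one_pow]

theorem coprime_sub_one_add_one_of_even {x : ℕ} (hx : Even x) : Coprime (x - 1) (x + 1) := by
  rcases Nat.eq_zero_or_pos x with rfl | hx0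
  · simp
  have hodd : Odd (x - 1) := by
    rcases hx with ⟨k, rfl⟩
    exact ⟨k - 1, by omega⟩
  have hsum : x + 1 = x - 1 + 2 := by omega
  rwa [hsum, coprime_self_add_right, coprime_two_right]

theorem coprime_pow_sub_one_pow_add_one {a m n : ℕ} (ha : Even a) (hn : n ≠ 0) (hmn : m ∣ n) :
    Coprime (a ^ m - 1) (a ^ n + 1) :=
  (coprime_sub_one_add_one_of_even (ha.pow_of_ne_zero hn)).coprime_dvd_left
    (pow_sub_one_dvd_pow_sub_one a hmn)

theorem pow_add_one_dvd_pow_add_one {a m n : ℕ} (hmn : m ∣ n) (hodd : Odd (n / m)) :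
    a ^ m + 1 ∣ a ^ n + 1 := by
  rw [← Nat.mul_div_cancel' hmn, pow_mul]
  simpa using hodd.nat_add_dvd_pow_add_pow (a ^ m) 1

theorem pow_add_one_dvd_pow_sub_one {a m n : ℕ} (h : 2 * m ∣ n) : a ^ m + 1 ∣ a ^ n - 1 :=
  (Dvd.intro _ (pow_two_mul_sub_one a m).symm).trans (pow_sub_one_dvd_pow_sub_one a h)

theorem gcd_pow_sub_one_pow_add_one_dvd (a r s : ℕ) :
    gcd (a ^ r - 1) (a ^ s + 1) ∣ a ^ gcd r (2 * s) - 1 := by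
  rw [← pow_sub_one_gcd_pow_sub_one, pow_two_mul_sub_one]
  exact gcd_dvd_gcd_of_dvd_right _ (Dvd.intro _ rfl)

theorem gcd_two_mul_right (r s : ℕ) : gcd r (2 * s) = gcd r s * gcd (r / gcd r s) 2 := by
  rcases Nat.eq_zero_or_pos (gcd r s) with hd | hd
  · simp [Nat.gcd_eq_zero_iff.mp hd]
  have hcop := coprime_div_gcd_div_gcd hd
  have hr := Nat.mul_div_cancel' (gcd_dvd_left r s)
  have hs := Nat.mul_div_cancel' (gcd_dvd_right r s)
  set d := gcd r s
  conv_lhs => rw [← hr, ← hs, mul_left_comm, gcd_mul_left, hcop.symm.gcd_mul_right_cancel_right]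

theorem gcd_two_mul_right_of_odd {r s : ℕ} (h : Odd (r / gcd r s)) : gcd r (2 * s) = gcd r s := by
  rw [gcd_two_mul_right, coprime_two_right.mpr h, mul_one]

theorem gcd_two_mul_right_of_even {r s : ℕ} (h : Even (r / gcd r s)) :
    gcd r (2 * s) = 2 * gcd r s := by
  rw [gcd_two_mul_right, gcd_eq_right h.two_dvd, mul_comm]

theorem odd_div_gcd_of_even_div_gcd {r s : ℕ} (hs : 0 < s) (h : Even (r / gcd r s)) :
    Odd (s / gcd r s) := by
  have hcop := coprime_div_gcd_div_gcd (gcd_pos_of_pos_right r hs)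
  rw [← Nat.not_even_iff_odd]
  intro hs2
  have := Nat.dvd_gcd h.two_dvd hs2.two_dvd
  rw [hcop] at this
  omega

end Nat

theorem gcd_two_pow_sub_one_add_one_general (r s : ℕ) (hs : 0 < s) :
    (Odd (r / Nat.gcd r s) → Nat.gcd (2 ^ r - 1) (2 ^ s + 1) = 1) ∧
    (Even (r / Nat.gcd r s) → Nat.gcd (2 ^ r - 1) (2 ^ s + 1) = 2 ^ Nat.gcd r s + 1) := by
  set d := Nat.gcd r s
  set g := Nat.gcd (2 ^ r - 1) (2 ^ s + 1)
  have hg : g ∣ 2 ^ Nat.gcd r (2 * s) - 1 := Nat.gcd_pow_sub_one_pow_add_one_dvd 2 r s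
  have hcop : Nat.Coprime (2 ^ d - 1) (2 ^ s + 1) :=
    Nat.coprime_pow_sub_one_pow_add_one even_two hs.ne' (Nat.gcd_dvd_right r s)
  constructor
  · intro hodd
    rw [Nat.gcd_two_mul_right_of_odd hodd] at hg
    exact Nat.eq_one_of_dvd_coprimes hcop hg (Nat.gcd_dvd_right _ _)
  · intro heven
    rw [Nat.gcd_two_mul_right_of_even heven, Nat.pow_two_mul_sub_one] at hg
    have hg_dvd : g ∣ 2 ^ d + 1 :=
      (hcop.coprime_dvd_right (Nat.gcd_dvd_right _ _)).symm.dvd_of_dvd_mul_right hg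
    refine Nat.dvd_antisymm hg_dvd (Nat.dvd_gcd ?_ ?_)
    · have h2d : 2 * d ∣ r :=
        mul_comm d 2 ▸ Nat.mul_dvd_of_dvd_div (Nat.gcd_dvd_left r s) heven.two_dvd
      exact Nat.pow_add_one_dvd_pow_sub_one h2d
    · exact Nat.pow_add_one_dvd_pow_add_one (Nat.gcd_dvd_right r s)
        (Nat.odd_div_gcd_of_even_div_gcd hs heven)

theorem gcd_two_pow_sub_one_add_one (r s : ℕ) (hr : 0 < r) (hs : 0 < s) :
    (Odd (r / Nat.gcd r s) → Nat.gcd (2 ^ r - 1) (2 ^ s + 1) = 1) ∧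
    (Even (r / Nat.gcd r s) → Nat.gcd (2 ^ r - 1) (2 ^ s + 1) = 2 ^ Nat.gcd r s + 1) :=
  gcd_two_pow_sub_one_add_one_general r s hs
end

section
/- Let n = 2m, d a positive integer with gcd(d, 2^n - 1) = 1, and f(x) = x^d + Σ_{i=2}^t u_i x^{d_i} a polynomial over F_{2^n} with leading term x^d. Then f is a permutation of F_{2^n} if and only if for every nonzero δ ∈ F_{2^n}, the sum over x ∈ F_{2^n} of (-1)^(Tr(x^d + Σ_{i=2}^t u_i δ^(d - d_i) x^{d_i})) equals 0. -/
/-!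
Let `χ(y) = (-1)^{Tr y}`, the canonical additive character of `𝔽_{2^n}`; it is primitive since the
trace is onto `𝔽₂`. For `δ ≠ 0` the substitution `x ↦ δx` turns
`x^d + ∑ u_i δ^{d-d_i} x^{d_i}` into `δ^d f(x)`, so the sums in question are
`∑_x χ(δ^d f(x))`, and `δ ↦ δ^d` permutes `𝔽_{2^n}^*` because `gcd(d, 2^n - 1) = 1`.
It remains that `f` is a permutation iff `∑_x χ(γ f(x)) = 0` for all `γ ≠ 0`: by orthogonality,
`∑_γ ∑_x χ(γ (f(x) - y))` is `2^n` times the number of preimages of `y`, while the terms with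
`γ ≠ 0` vanish, leaving `2^n`.
-/

open Finset

namespace AddChar

variable {R R' : Type*} [CommRing R] [Fintype R] [CommRing R'] [IsDomain R'] [CharZero R']
  {ψ : AddChar R R'}

theorem IsPrimitive.bijective_iff_sum_apply_mul_eq_zero (hψ : ψ.IsPrimitive) (f : R → R) :
    Function.Bijective f ↔ ∀ γ ≠ 0, ∑ x, ψ (γ * f x) = 0 := by
  classical
  constructor
  · intro hf γ hγ
    exact (Fintype.sum_bijective f hf (fun x => ψ (γ * f x)) (ψ.mulShift γ) fun _ => rfl).trans
      (sum_eq_zero_of_ne_one (hψ hγ))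
  · refine fun h => Finite.surjective_iff_bijective.mp fun y => ?_
    by_contra! hy
    have hsplit (γ x : R) : ψ (γ * (f x - y)) = ψ (γ * f x) * ψ (-(γ * y)) := by
      rw [mul_sub, sub_eq_add_neg, map_add_eq_mul]
    have hinner (γ : R) (hγ : γ ≠ 0) : ∑ x, ψ (γ * (f x - y)) = 0 := by
      simp only [hsplit, ← sum_mul, h γ hγ, zero_mul]
    have hcard : ∑ γ, ∑ x, ψ (γ * (f x - y)) = Fintype.card R := by
      rw [sum_eq_single 0 (fun γ _ hγ => hinner γ hγ) (by simp)]
      simp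
    have hzero : ∑ γ, ∑ x, ψ (γ * (f x - y)) = 0 := by
      rw [sum_comm]
      refine sum_eq_zero fun x _ => ?_
      simp [sum_mulShift _ hψ, sub_ne_zero.mpr (hy x)]
    exact Nat.cast_ne_zero.mpr Fintype.card_ne_zero (hcard.symm.trans hzero)

end AddChar

namespace FiniteField

variable (F : Type*) [Field F] [Fintype F] [Algebra (ZMod 2) F]

noncomputable def traceSign : AddChar F ℤ where
  toFun x := if Algebra.trace (ZMod 2) F x = 0 then 1 else -1
  map_zero_eq_one' := by simp
  map_add_eq_mul' a b := by
    rw [map_add]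
    generalize Algebra.trace (ZMod 2) F a = s
    generalize Algebra.trace (ZMod 2) F b = t
    fin_cases s <;> fin_cases t <;> decide

theorem traceSign_isPrimitive : (traceSign F).IsPrimitive := by
  intro a ha
  obtain ⟨b, hb⟩ := Algebra.trace_surjective (ZMod 2) F 1
  rw [AddChar.ne_one_iff]
  refine ⟨a⁻¹ * b, ?_⟩
  simp [traceSign, AddChar.mulShift_apply, mul_inv_cancel_left₀ ha, hb]

variable {F}

theorem sum_range_pow_two_pow_eq_zero_iff {n : ℕ} (hcard : Fintype.card F = 2 ^ n) (x : F) :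
    ∑ j ∈ range n, x ^ 2 ^ j = 0 ↔ Algebra.trace (ZMod 2) F x = 0 := by
  have hrank : Module.finrank (ZMod 2) F = n := by
    have h := Module.card_eq_pow_finrank (K := ZMod 2) (V := F)
    rw [hcard, ZMod.card] at h
    exact Nat.pow_right_injective le_rfl h.symm
  have htrace := algebraMap_trace_eq_sum_pow (ZMod 2) F x
  rw [hrank, Nat.card_zmod] at htrace
  rw [← htrace, map_eq_zero]

theorem ite_sum_range_pow_two_pow [DecidableEq F] {n : ℕ} (hcard : Fintype.card F = 2 ^ n)
    (x : F) :
    (if ∑ j ∈ range n, x ^ 2 ^ j = 0 then (1 : ℤ) else -1) = traceSign F x := by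
  simp only [sum_range_pow_two_pow_eq_zero_iff hcard]; rfl

end FiniteField

section Twist

variable {K ι : Type*} [Field K] [Fintype ι] (u : ι → K) (d : ℕ) (dd : ι → ℕ)

theorem pow_mul_add_sum_mul_pow {δ : K} (hδ : δ ≠ 0) (x : K) :
    δ ^ d * (x ^ d + ∑ i, u i * x ^ dd i) =
      (δ * x) ^ d + ∑ i, u i * δ ^ ((d : ℤ) - dd i) * (δ * x) ^ dd i := by
  have hzpow (i : ι) : δ ^ ((d : ℤ) - dd i) * δ ^ dd i = δ ^ d := by
    rw [← zpow_natCast δ (dd i), ← zpow_add₀ hδ, sub_add_cancel, zpow_natCast]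
  simp only [mul_add, mul_sum, mul_pow]
  congr 1
  refine sum_congr rfl fun i _ => ?_
  rw [← hzpow i]
  ring

theorem sum_comp_twist_eq_sum_comp_pow_mul [Fintype K] {M : Type*} [AddCommMonoid M] (g : K → M)
    {δ : K} (hδ : δ ≠ 0) :
    ∑ x, g (x ^ d + ∑ i, u i * δ ^ ((d : ℤ) - dd i) * x ^ dd i) =
      ∑ x, g (δ ^ d * (x ^ d + ∑ i, u i * x ^ dd i)) :=
  (Fintype.sum_bijective (δ * ·) (mulLeft_bijective₀ δ hδ) _ _
    fun x => by rw [pow_mul_add_sum_mul_pow u d dd hδ]).symm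

end Twist

theorem exists_pow_eq_of_coprime_card_sub_one {G₀ : Type*} [GroupWithZero G₀] {d : ℕ}
    (hd : d.Coprime (Nat.card G₀ - 1)) {γ : G₀} (hγ : γ ≠ 0) : ∃ δ ≠ 0, δ ^ d = γ := by
  have hcop : (Nat.card G₀ˣ).Coprime d := by
    rwa [Nat.card_units, Nat.coprime_comm]
  obtain ⟨δ, hδ⟩ := (powCoprime hcop).surjective (Units.mk0 γ hγ)
  exact ⟨δ, δ.ne_zero, congrArg Units.val hδ⟩

theorem permutation_iff_char_sums_vanish_of_form_general (n : ℕ)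
    (F : Type*) [Field F] [Fintype F] [DecidableEq F] (hcard : Fintype.card F = 2 ^ n)
    (ι : Type*) [Fintype ι] (u : ι → F) (d : ℕ) (dd : ι → ℕ)
    (hgcd : Nat.gcd d (2 ^ n - 1) = 1) :
    Function.Bijective (fun x : F => x ^ d + ∑ i, u i * x ^ dd i) ↔
      ∀ δ : F, δ ≠ 0 →
        ∑ x : F,
          (if (∑ j ∈ Finset.range n,
              (x ^ d + ∑ i, u i * δ ^ ((d : ℤ) - (dd i : ℤ)) * x ^ dd i) ^ 2 ^ j) = 0
            then (1 : ℤ) else -1) = 0 := by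
  have : CharP F 2 := charP_of_card_eq_prime_pow hcard
  have := ZMod.algebra F 2
  have hcop : d.Coprime (Nat.card F - 1) := by rwa [Nat.card_eq_fintype_card, hcard]
  simp only [FiniteField.ite_sum_range_pow_two_pow hcard]
  rw [(FiniteField.traceSign_isPrimitive F).bijective_iff_sum_apply_mul_eq_zero]
  constructor
  · intro h δ hδ
    rw [sum_comp_twist_eq_sum_comp_pow_mul u d dd _ hδ]
    exact h _ (pow_ne_zero d hδ)
  · intro h γ hγ
    obtain ⟨δ, hδ, rfl⟩ := exists_pow_eq_of_coprime_card_sub_one hcop hγ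
    rw [← sum_comp_twist_eq_sum_comp_pow_mul u d dd _ hδ]
    exact h δ hδ

/-- Criterion for `f(x) = x^d + ∑_{i} u_i x^{d_i}` (with `gcd(d, 2^n - 1) = 1`) to be a
permutation of `𝔽_{2^n}`, `n = 2m`: `f` is bijective iff for every nonzero `δ` the character
sum `∑_x (-1)^{Tr(x^d + ∑_i u_i δ^{d - d_i} x^{d_i})}` vanishes. Here `Tr` is the absolute
trace `x ↦ ∑_{j<n} x^{2^j}` and `δ^{d - d_i}` is an integer power (negative via inverses). -/
theorem permutation_iff_char_sums_vanish_of_form (n m : ℕ) (hm : 0 < m) (hn : n = 2 * m)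
    (F : Type*) [Field F] [Fintype F] [DecidableEq F] (hcard : Fintype.card F = 2 ^ n)
    (ι : Type*) [Fintype ι] (u : ι → F) (d : ℕ) (hd : 0 < d) (dd : ι → ℕ)
    (hdd : ∀ i, 0 < dd i) (hgcd : Nat.gcd d (2 ^ n - 1) = 1) :
    Function.Bijective (fun x : F => x ^ d + ∑ i, u i * x ^ dd i) ↔
      ∀ δ : F, δ ≠ 0 →
        ∑ x : F,
          (if (∑ j ∈ Finset.range n,
              (x ^ d + ∑ i, u i * δ ^ ((d : ℤ) - (dd i : ℤ)) * x ^ dd i) ^ 2 ^ j) = 0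
            then (1 : ℤ) else -1) = 0 :=
  permutation_iff_char_sums_vanish_of_form_general n F hcard ι u d dd hgcd
end

section
/- Let n = 2m, s, l, e positive integers, d_1 = s(2^m - 1) + e, d_2 = (s - l)(2^m - 1) + e with gcd(d_1, 2^n - 1) = 1. Suppose r := gcd(l, 2^m + 1) > 1, gcd(e + l - 2s, 2^m + 1) = 1, and u belongs to U \ U^r, where U = {λ ∈ F_{2^n} : λ^(2^m+1) = 1} and U^r = {v^r : v ∈ U}. Then the map x ↦ x^{d_1} + u x^{d_2} is a bijection of F_{2^n}. -/
/-!
Put `q = 2 ^ m` and write the binomial as `f x = x ^ d₂ * h (x ^ (q - 1))` with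
`h t = t ^ l + u`, using `d₁ = d₂ + (q - 1) l`. For `x ≠ 0`, `ξ = x ^ (q - 1)` lies on the
circle `U = {ζ : ζ ^ (q + 1) = 1}`, on which the Frobenius `ζ ↦ ζ ^ q` is inversion. Raising
`f x` to the `q`-th power therefore gives `u * f x ^ q = f x * ξ ^ (d₂ + q l)`, so the value
`f x ≠ 0` determines `ξ ^ (d₂ + q l)`, hence `ξ`, because `d₂ + q l ≡ e + l - 2 s` is prime to
`q + 1`. Then `f x` determines `x ^ d₂` as well, and `x` itself because `d₂` is prime to `q - 1`.
The hypothesis `u ∉ U ^ r` says exactly that `h` has no root on `U`, so that `f x = 0` only for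
`x = 0`.
-/

lemma eq_of_pow_eq_pow_of_coprime {G₀ : Type*} [CommGroupWithZero G₀] {a b : G₀} {m n : ℕ}
    (hmn : m.Coprime n) (hb : b ≠ 0) (hm : a ^ m = b ^ m) (hn : a ^ n = b ^ n) : a = b := by
  have hdiv : ∀ k, a ^ k = b ^ k → (a / b) ^ k = 1 := fun k h => by
    rw [div_pow, h, div_self (pow_ne_zero k hb)]
  exact (div_eq_one_iff_eq hb).1 ((pow_eq_one_iff_of_coprime hmn).1 ⟨hdiv m hm, hdiv n hn⟩)

namespace FiniteField

variable {F : Type*} [Field F] [Fintype F] {q : ℕ}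

lemma add_pow_of_card_eq_sq (hF : Fintype.card F = q ^ 2) (a b : F) :
    (a + b) ^ q = a ^ q + b ^ q := by
  obtain ⟨p, _, N, hp, hpN⟩ := FiniteField.card' F
  obtain ⟨i, -, rfl⟩ := (Nat.dvd_prime_pow hp).1 (hpN ▸ hF ▸ Dvd.intro_left _ (sq q).symm)
  have := Fact.mk hp
  exact add_pow_char_pow a b p i

lemma pow_sub_one_pow_add_one (hF : Fintype.card F = q ^ 2) {x : F} (hx : x ≠ 0) :
    (x ^ (q - 1)) ^ (q + 1) = 1 := by
  have hexp : (q - 1) * (q + 1) = Fintype.card F - 1 := by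
    rw [hF, sq, mul_self_tsub_one, mul_comm]
  rw [← pow_mul, hexp, pow_card_sub_one_eq_one x hx]

lemma mul_mul_add_pow_eq_add (hF : Fintype.card F = q ^ 2) {a b : F} (ha : a ^ (q + 1) = 1)
    (hb : b ^ (q + 1) = 1) : a * b * (a + b) ^ q = a + b := by
  rw [add_pow_of_card_eq_sq hF]
  linear_combination b * ha + a * hb

variable (d l : ℕ) (u : F)

lemma mul_pow_sub_one_pow_add_pow (hF : Fintype.card F = q ^ 2) (hu : u ^ (q + 1) = 1) {x : F}
    (hx : x ≠ 0) :
    u * (x ^ d * ((x ^ (q - 1)) ^ l + u)) ^ q =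
      x ^ d * ((x ^ (q - 1)) ^ l + u) * (x ^ (q - 1)) ^ (d + q * l) := by
  have hq : q ≠ 0 := by
    rintro rfl
    exact Fintype.card_ne_zero (hF.trans (zero_pow two_ne_zero))
  have hxq : (x ^ d) ^ q = x ^ d * (x ^ (q - 1)) ^ d := by
    rw [← mul_pow, ← pow_succ', Nat.sub_add_cancel (Nat.one_le_iff_ne_zero.2 hq), ← pow_mul,
      ← pow_mul, mul_comm]
  have hξ := pow_sub_one_pow_add_one hF hx
  generalize x ^ (q - 1) = ξ at hξ hxq ⊢
  have hξl : (ξ ^ l) ^ (q + 1) = 1 := by rw [← pow_mul, mul_comm, pow_mul, hξ, one_pow]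
  have hfrob := mul_mul_add_pow_eq_add hF hξl hu
  rw [mul_pow, hxq]
  linear_combination
    (x ^ d * ξ ^ d * ξ ^ (q * l)) * hfrob - (x ^ d * ξ ^ d * u * (ξ ^ l + u) ^ q) * hξl

variable {d l u}

lemma pow_mul_pow_sub_one_pow_add_eq_zero_iff (hF : Fintype.card F = q ^ 2) (hd : 0 < d)
    (hU : ∀ ζ : F, ζ ^ (q + 1) = 1 → ζ ^ l + u ≠ 0) {x : F} :
    x ^ d * ((x ^ (q - 1)) ^ l + u) = 0 ↔ x = 0 := by
  refine ⟨fun h => ?_, fun h => by rw [h, zero_pow hd.ne', zero_mul]⟩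
  by_contra hx
  rcases mul_eq_zero.1 h with h | h
  · exact hx (pow_eq_zero_iff hd.ne' |>.1 h)
  · exact hU _ (pow_sub_one_pow_add_one hF hx) h

theorem bijective_pow_mul_pow_sub_one_pow_add (hF : Fintype.card F = q ^ 2) (hd : 0 < d)
    (hd_coprime : d.Coprime (q - 1)) (hdl_coprime : (d + q * l).Coprime (q + 1))
    (hu : u ^ (q + 1) = 1) (hU : ∀ ζ : F, ζ ^ (q + 1) = 1 → ζ ^ l + u ≠ 0) :
    Function.Bijective fun x : F => x ^ d * ((x ^ (q - 1)) ^ l + u) := by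
  have hzero := fun x : F => pow_mul_pow_sub_one_pow_add_eq_zero_iff (x := x) hF hd hU
  refine Finite.injective_iff_bijective.1 fun x y hxy => ?_
  by_cases hy : y = 0
  · rwa [hy, (hzero 0).2 rfl, hzero, ← hy] at hxy
  have hx : x ≠ 0 := fun hx => hy ((hzero y).1 (hxy ▸ (hzero x).2 hx))
  have hfy : y ^ d * ((y ^ (q - 1)) ^ l + u) ≠ 0 := fun h => hy ((hzero y).1 h)
  have hcircle : x ^ (q - 1) = y ^ (q - 1) := by
    refine eq_of_pow_eq_pow_of_coprime hdl_coprime (pow_ne_zero _ hy) (mul_left_cancel₀ hfy ?_)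
      (by rw [pow_sub_one_pow_add_one hF hx, pow_sub_one_pow_add_one hF hy])
    have hx_frob := mul_pow_sub_one_pow_add_pow d l u hF hu hx
    rw [hxy] at hx_frob
    exact hx_frob.symm.trans (mul_pow_sub_one_pow_add_pow d l u hF hu hy)
  rw [hcircle] at hxy
  exact eq_of_pow_eq_pow_of_coprime hd_coprime hy
    (mul_right_cancel₀ (hU _ (pow_sub_one_pow_add_one hF hy)) hxy) hcircle

end FiniteField

lemma exists_pow_eq_one_and_pow_eq_pow_gcd {M : Type*} [Monoid M] {ζ : M} {N : ℕ}
    (hζ : ζ ^ N = 1) (l : ℕ) : ∃ v : M, v ^ N = 1 ∧ ζ ^ l = v ^ Nat.gcd l N := by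
  refine ⟨ζ ^ (l / Nat.gcd l N), ?_, ?_⟩
  · rw [← pow_mul, mul_comm, pow_mul, hζ, one_pow]
  · rw [← pow_mul, Nat.div_mul_cancel (Nat.gcd_dvd_left _ _)]

lemma coprime_sub_mul_sub_one_add_add_mul {q s l e : ℕ} (hq : 1 ≤ q) (hls : l ≤ s)
    (h : Int.gcd ((e : ℤ) + l - 2 * s) (q + 1) = 1) :
    ((s - l) * (q - 1) + e + q * l).Coprime (q + 1) := by
  rw [← Nat.isCoprime_iff_coprime]
  have hcast : (((s - l) * (q - 1) + e + q * l : ℕ) : ℤ) = (e + l - 2 * s) + (q + 1) * s := by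
    push_cast [hls, hq]
    ring
  rw [hcast]
  push_cast
  exact (Int.isCoprime_iff_gcd_eq_one.2 h).add_mul_left_left _

theorem binomial_permutation_general (n m s l e : ℕ) (hn : n = 2 * m)
    (he : 0 < e) (hls : l ≤ s)
    (F : Type*) [Field F] [Fintype F] (hcard : Fintype.card F = 2 ^ n)
    (d₁ d₂ : ℕ) (hd₁ : d₁ = s * (2 ^ m - 1) + e) (hd₂ : d₂ = (s - l) * (2 ^ m - 1) + e)
    (hgcd : Nat.gcd d₁ (2 ^ n - 1) = 1)
    (hgcd2 : Int.gcd ((e : ℤ) + (l : ℤ) - 2 * (s : ℤ)) ((2 : ℤ) ^ m + 1) = 1)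
    (u : F) (hu : u ^ (2 ^ m + 1) = 1)
    (hu2 : ¬ ∃ v : F, v ^ (2 ^ m + 1) = 1 ∧ u = v ^ Nat.gcd l (2 ^ m + 1)) :
    Function.Bijective (fun x : F => x ^ d₁ + u * x ^ d₂) := by
  have hF : Fintype.card F = (2 ^ m) ^ 2 := by rw [hcard, hn, pow_mul']
  have : CharP F 2 := charP_of_card_eq_prime_pow hcard
  have hd : d₁ = d₂ + (2 ^ m - 1) * l := by
    rw [hd₁, hd₂, ← Nat.sub_add_cancel hls, Nat.add_sub_cancel]
    ring
  have hd₂_coprime : d₂.Coprime (2 ^ m - 1) := by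
    have hdvd : 2 ^ m - 1 ∣ 2 ^ n - 1 :=
      ⟨2 ^ m + 1, by rw [hn, pow_mul', sq, mul_self_tsub_one, mul_comm]⟩
    rw [← Nat.coprime_add_mul_left_left _ _ l, ← hd]
    exact Nat.Coprime.coprime_dvd_right hdvd hgcd
  have hdl_coprime : (d₂ + 2 ^ m * l).Coprime (2 ^ m + 1) :=
    hd₂ ▸ coprime_sub_mul_sub_one_add_add_mul Nat.one_le_two_pow hls (by exact_mod_cast hgcd2)
  have hroot : ∀ ζ : F, ζ ^ (2 ^ m + 1) = 1 → ζ ^ l + u ≠ 0 := fun ζ hζ hζu => by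
    obtain ⟨v, hv, hζv⟩ := exists_pow_eq_one_and_pow_eq_pow_gcd hζ l
    exact hu2 ⟨v, hv, CharTwo.add_eq_zero.1 hζu ▸ hζv⟩
  have hfun : (fun x : F => x ^ d₁ + u * x ^ d₂) =
      fun x => x ^ d₂ * ((x ^ (2 ^ m - 1)) ^ l + u) := by
    funext x
    rw [hd, pow_add, pow_mul]
    ring
  rw [hfun]
  exact FiniteField.bijective_pow_mul_pow_sub_one_pow_add hF (by omega) hd₂_coprime hdl_coprime
    hu hroot

/-- Main theorem: with `n = 2m`, `d₁ = s(2^m-1)+e`, `d₂ = (s-l)(2^m-1)+e`, `gcd(d₁,2^n-1)=1`,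
`r = gcd(l, 2^m+1) > 1`, `gcd(e+l-2s, 2^m+1) = 1`, and `u ∈ U \ U^r` (where
`U = {λ : λ^(2^m+1)=1}`), the binomial `x^{d₁} + u x^{d₂}` permutes `𝔽_{2^n}`. -/
theorem binomial_permutation (n m s l e : ℕ) (hm : 0 < m) (hn : n = 2 * m)
    (hs : 0 < s) (hl : 0 < l) (he : 0 < e) (hls : l ≤ s)
    (F : Type*) [Field F] [Fintype F] (hcard : Fintype.card F = 2 ^ n)
    (d₁ d₂ : ℕ) (hd₁ : d₁ = s * (2 ^ m - 1) + e) (hd₂ : d₂ = (s - l) * (2 ^ m - 1) + e)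
    (hgcd : Nat.gcd d₁ (2 ^ n - 1) = 1)
    (hr : 1 < Nat.gcd l (2 ^ m + 1))
    (hgcd2 : Int.gcd ((e : ℤ) + (l : ℤ) - 2 * (s : ℤ)) ((2 : ℤ) ^ m + 1) = 1)
    (u : F) (hu : u ^ (2 ^ m + 1) = 1)
    (hu2 : ¬ ∃ v : F, v ^ (2 ^ m + 1) = 1 ∧ u = v ^ Nat.gcd l (2 ^ m + 1)) :
    Function.Bijective (fun x : F => x ^ d₁ + u * x ^ d₂) :=
  binomial_permutation_general n m s l e hn he hls F hcard d₁ d₂ hd₁ hd₂ hgcd hgcd2 u hu hu2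
end

section
/- Let n = 2m, s a positive integer, d = s(2^m - 1) + 1 with gcd(d, 2^n - 1) = 1. Suppose r := gcd(s, 2^m + 1) > 1 and gcd(s - 1, 2^m + 1) = 1. Then for every u ∈ U \ U^r, the map x ↦ x^d + u·x is a bijection of F_{2^n}, where U is the unit circle {λ : λ^(2^m+1) = 1} and U^r = {v^r : v ∈ U}. -/
/-!
Write `q = 2 ^ m` and `U = {λ | λ ^ (q + 1) = 1}`. For `x ≠ 0` put `λ = x ^ (q - 1) ∈ U`, so
`f x = x ^ d + u x = x (λ ^ s + u)`, and `λ ^ s + u ≠ 0` because `u` is not an `r`-th power in `U`.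
On `U` the Frobenius `y ↦ y ^ q` is inversion, which gives `f(x) ^ (q - 1) = λ ^ (1 - s) / u`.
Hence `f x` determines `λ ^ (s - 1)`, hence `λ` since `gcd (s - 1, q + 1) = 1`, hence
`x = f x / (λ ^ s + u)`: `f` is injective on the finite field, so bijective.
-/

open Function

section

variable {G₀ : Type*} [CommGroupWithZero G₀] {k s : ℕ}

theorem eq_one_of_pow_eq_self {t : G₀} (ht : t ≠ 0) (htk : t ^ k = 1) (hts : t ^ s = t)
    (hcop : Nat.Coprime (s - 1) k) : t = 1 := by
  cases s with
  | zero => exact hts.symm.trans (pow_zero t)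
  | succ n =>
    have htn : t ^ n = 1 := mul_eq_right₀ ht |>.mp (by rwa [← pow_succ])
    exact orderOf_eq_one_iff.mp <| Nat.dvd_one.mp <|
      hcop ▸ Nat.dvd_gcd (orderOf_dvd_of_pow_eq_one htn) (orderOf_dvd_of_pow_eq_one htk)

theorem eq_of_mul_pow_eq_mul_pow {a b : G₀} (ha : a ≠ 0) (hb : b ≠ 0) (hak : a ^ k = 1)
    (hbk : b ^ k = 1) (hab : a ^ s * b = b ^ s * a) (hcop : Nat.Coprime (s - 1) k) : a = b := by
  have hts : (a / b) ^ s = a / b := by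
    rw [div_pow, div_eq_div_iff (pow_ne_zero _ hb) hb, hab, mul_comm]
  have htk : (a / b) ^ k = 1 := by rw [div_pow, hak, hbk, div_one]
  exact (div_eq_one_iff_eq hb).mp (eq_one_of_pow_eq_self (div_ne_zero ha hb) htk hts hcop)

end

section Niho

variable {F : Type*} [Field F] (p : ℕ) [ExpChar F p] {m s : ℕ} {u : F}

/-- On the circle `a ^ (q + 1) = 1` the `q`-Frobenius is inversion, so
`(a + b) ^ q = a⁻¹ + b⁻¹ = (a + b) / (a b)`. -/
theorem add_pow_mul_mul_eq_add {a b : F} (ha : a ^ (p ^ m + 1) = 1) (hb : b ^ (p ^ m + 1) = 1) :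
    (a + b) ^ p ^ m * (a * b) = a + b := by
  rw [pow_succ] at ha hb
  linear_combination (add_pow_expChar_pow a b p m) * (a * b) + b * ha + a * hb

theorem mul_pow_add_pow_frobenius {x l : F} (hl : l ^ (p ^ m + 1) = 1) (hu : u ^ (p ^ m + 1) = 1)
    (hx : x ^ p ^ m = l * x) :
    (x * (l ^ s + u)) ^ p ^ m * (u * l ^ s) = l * (x * (l ^ s + u)) := by
  have hls : (l ^ s) ^ (p ^ m + 1) = 1 := by rw [← pow_mul, mul_comm, pow_mul, hl, one_pow]
  have := add_pow_mul_mul_eq_add p hls hu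
  rw [mul_pow, hx]
  linear_combination (l * x) * this


theorem pow_sub_one_pow_add_one_eq_one [Fintype F] {q : ℕ} (hcard : Fintype.card F = q ^ 2) {x : F}
    (hx : x ≠ 0) : (x ^ (q - 1)) ^ (q + 1) = 1 := by
  rw [← pow_mul, mul_comm, ← one_pow 2, ← Nat.sq_sub_sq, one_pow, ← hcard]
  exact FiniteField.pow_card_sub_one_eq_one x hx

theorem eq_of_mul_pow_add_eq {x y l k : F} (hl : l ^ (p ^ m + 1) = 1) (hk : k ^ (p ^ m + 1) = 1)
    (hu : u ^ (p ^ m + 1) = 1) (hxl : x ^ p ^ m = l * x) (hyk : y ^ p ^ m = k * y)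
    (hxy : x * (l ^ s + u) = y * (k ^ s + u)) (hA : x * (l ^ s + u) ≠ 0)
    (hcop : Nat.Coprime (s - 1) (p ^ m + 1)) : l = k := by
  have hAx := mul_pow_add_pow_frobenius p (s := s) hl hu hxl
  have hAy := mul_pow_add_pow_frobenius p (s := s) hk hu hyk
  rw [← hxy] at hAy
  set A := x * (l ^ s + u)
  have hu0 : u ≠ 0 := by rintro rfl; simp at hu
  have hlk : l ^ s * k = k ^ s * l := by
    refine mul_left_cancel₀ (mul_ne_zero (mul_ne_zero (pow_ne_zero (p ^ m) hA) hu0) hA) ?_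
    linear_combination (k * A) * hAx - (l * A) * hAy
  exact eq_of_mul_pow_eq_mul_pow (by rintro rfl; simp at hl) (by rintro rfl; simp at hk)
    hl hk hlk hcop

theorem injective_pow_niho_add_mul [Fintype F] (hcard : Fintype.card F = (p ^ m) ^ 2)
    (hu : u ^ (p ^ m + 1) = 1) (hne : ∀ l : F, l ^ (p ^ m + 1) = 1 → l ^ s + u ≠ 0)
    (hcop : Nat.Coprime (s - 1) (p ^ m + 1)) :
    Injective fun x : F => x ^ (s * (p ^ m - 1) + 1) + u * x := by
  have hq : p ^ m ≠ 0 := (expChar_pow_pos F p m).ne'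
  have hcirc (x : F) (hx : x ≠ 0) := pow_sub_one_pow_add_one_eq_one hcard hx
  have hfactor (x : F) : x ^ (s * (p ^ m - 1) + 1) + u * x = x * ((x ^ (p ^ m - 1)) ^ s + u) := by
    rw [pow_succ, mul_comm s, pow_mul]; ring
  have hne' (x : F) (hx : x ≠ 0) : x * ((x ^ (p ^ m - 1)) ^ s + u) ≠ 0 :=
    mul_ne_zero hx (hne _ (hcirc x hx))
  intro x y hxy
  simp only [hfactor] at hxy
  rcases eq_or_ne x 0 with rfl | hx
  · by_contra hy
    exact hne' y (Ne.symm hy) (by simpa using hxy.symm)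
  have hy : y ≠ 0 := by
    rintro rfl
    exact hne' x hx (by simpa using hxy)
  have hlk := eq_of_mul_pow_add_eq p (hcirc x hx) (hcirc y hy) hu (pow_sub_one_mul hq x).symm
    (pow_sub_one_mul hq y).symm hxy (hne' x hx) hcop
  rw [← hlk] at hxy
  exact mul_right_cancel₀ (hne _ (hcirc x hx)) hxy

end Niho

theorem binomial_permutation_niho_general (n m s : ℕ) (hn : n = 2 * m)
    (F : Type*) [Field F] [Fintype F] (hcard : Fintype.card F = 2 ^ n)
    (d : ℕ) (hd : d = s * (2 ^ m - 1) + 1)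
    (hgcd2 : Nat.gcd (s - 1) (2 ^ m + 1) = 1)
    (u : F) (hu : u ^ (2 ^ m + 1) = 1)
    (hu2 : ¬ ∃ v : F, v ^ (2 ^ m + 1) = 1 ∧ u = v ^ Nat.gcd s (2 ^ m + 1)) :
    Function.Bijective (fun x : F => x ^ d + u * x) := by
  have : CharP F 2 := charP_of_card_eq_prime_pow hcard
  have hcard' : Fintype.card F = (2 ^ m) ^ 2 := by rw [hcard, hn, ← pow_mul, mul_comm]
  have hne (l : F) (hl : l ^ (2 ^ m + 1) = 1) : l ^ s + u ≠ 0 := by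
    rw [Ne, CharTwo.add_eq_zero]
    intro hls
    refine hu2 ⟨l ^ (s / Nat.gcd s (2 ^ m + 1)), ?_, ?_⟩
    · rw [← pow_mul, mul_comm, pow_mul, hl, one_pow]
    · rw [← pow_mul, Nat.div_mul_cancel (Nat.gcd_dvd_left _ _), hls]
  subst hd
  exact Finite.injective_iff_bijective.mp (injective_pow_niho_add_mul 2 hcard' hu hne hgcd2)

/-- With `n = 2m`, `d = s(2^m-1)+1`, `gcd(d, 2^n-1) = 1`, `r = gcd(s, 2^m+1) > 1` and
`gcd(s-1, 2^m+1) = 1`, for every `u ∈ U \ U^r` the binomial `x^d + u x` permutes `𝔽_{2^n}`. -/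
theorem binomial_permutation_niho (n m s : ℕ) (hm : 0 < m) (hn : n = 2 * m) (hs : 0 < s)
    (F : Type*) [Field F] [Fintype F] (hcard : Fintype.card F = 2 ^ n)
    (d : ℕ) (hd : d = s * (2 ^ m - 1) + 1)
    (hgcd : Nat.gcd d (2 ^ n - 1) = 1)
    (hr : 1 < Nat.gcd s (2 ^ m + 1))
    (hgcd2 : Nat.gcd (s - 1) (2 ^ m + 1) = 1)
    (u : F) (hu : u ^ (2 ^ m + 1) = 1)
    (hu2 : ¬ ∃ v : F, v ^ (2 ^ m + 1) = 1 ∧ u = v ^ Nat.gcd s (2 ^ m + 1)) :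
    Function.Bijective (fun x : F => x ^ d + u * x) :=
  binomial_permutation_niho_general n m s hn F hcard d hd hgcd2 u hu hu2
end

section
/- Let m be odd, n = 2m, s = 6, d = 6(2^m - 1) + 1, and assume 5 does not divide m. Then gcd(d, 2^n - 1) = 1, gcd(6, 2^m + 1) = 3, and gcd(5, 2^m + 1) = 1; consequently for every u ∈ U \ U^3, the map x ↦ u^{-1} x^d is a complete permutation of F_{2^n}. -/
/-!
Put `q = 2^m`, so `|F| = q²`, and `z = x^(q-1)`, which lies in `U` when `x ≠ 0`. For
`d = s(q-1) + 1` one has `x^d + u x = x (z^s + u)`. Since `y ↦ y^q` is additive and inverts the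
elements of `U`, the value `g = x^d + u x` satisfies `g^q u z^(s-1) = g`, so for `g ≠ 0` it
determines `z^(s-1)`, hence `z` when `gcd(s-1, q+1) = 1`, and then `x`. For `s = 6` the factor
`z^6 + u` cannot vanish because `u` is not a cube in `U`, and `gcd(5, q+1) = 1`. Bijectivity of
`x ↦ x^d` comes from `gcd(d, q²-1) = gcd(2s-1, q+1) = gcd(11, q+1) = 1`. The arithmetic facts
follow from the orders of `2` modulo `3`, `5` and `11`.
-/

open Function

theorem three_dvd_two_pow_add_one {m : ℕ} (hm : Odd m) : 3 ∣ 2 ^ m + 1 := by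
  simpa using hm.nat_add_dvd_pow_add_pow 2 1

theorem gcd_six_two_pow_add_one {m : ℕ} (hm : Odd m) : Nat.gcd 6 (2 ^ m + 1) = 3 := by
  have hodd : Odd (2 ^ m + 1) := (Nat.even_pow.2 ⟨even_two, hm.pos.ne'⟩).add_one
  rw [show 6 = 2 * 3 by rfl, Nat.Coprime.gcd_mul_left_cancel 3 (Nat.coprime_two_left.2 hodd)]
  exact Nat.gcd_eq_left (three_dvd_two_pow_add_one hm)

theorem not_five_dvd_two_pow_add_one {m : ℕ} (hm : Odd m) : ¬ 5 ∣ 2 ^ m + 1 := by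
  rw [← ZMod.natCast_eq_zero_iff]
  push_cast
  rw [pow_eq_pow_mod m (by decide : (2 : ZMod 5) ^ 4 = 1)]
  obtain h | h : m % 4 = 1 ∨ m % 4 = 3 := by obtain ⟨j, rfl⟩ := hm; omega
  all_goals rw [h]; decide

theorem not_eleven_dvd_two_pow_add_one {m : ℕ} (hm : Odd m) (h5 : ¬ 5 ∣ m) :
    ¬ 11 ∣ 2 ^ m + 1 := by
  rw [← ZMod.natCast_eq_zero_iff]
  push_cast
  rw [pow_eq_pow_mod m (by decide : (2 : ZMod 11) ^ 10 = 1)]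
  obtain h | h | h | h : m % 10 = 1 ∨ m % 10 = 3 ∨ m % 10 = 7 ∨ m % 10 = 9 := by
    obtain ⟨j, rfl⟩ := hm; omega
  all_goals rw [h]; decide

theorem coprime_mul_sub_one_add_one_sq_sub_one {s q : ℕ} (hs : s ≠ 0) (hq : q ≠ 0)
    (h : (2 * s - 1).Coprime (q + 1)) : (s * (q - 1) + 1).Coprime (q ^ 2 - 1) := by
  rw [show q ^ 2 - 1 = (q - 1) * (q + 1) by rw [mul_comm, ← Nat.sq_sub_sq, one_pow]]
  refine Nat.Coprime.mul_right ?_ ?_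
  · exact (Nat.coprime_mul_right_add_left 1 _ s).2 (Nat.coprime_one_left _)
  · set g := (s * (q - 1) + 1).gcd (q + 1)
    have hsum : s * (q - 1) + 1 + (2 * s - 1) = s * (q + 1) := by
      obtain ⟨s, rfl⟩ := Nat.exists_eq_succ_of_ne_zero hs
      obtain ⟨q, rfl⟩ := Nat.exists_eq_succ_of_ne_zero hq
      simp only [Nat.succ_eq_add_one, Nat.add_sub_cancel, mul_add, mul_one]
      omega
    have hg : g ∣ 2 * s - 1 :=
      (Nat.dvd_add_right (Nat.gcd_dvd_left _ _)).1
        (hsum ▸ (Nat.gcd_dvd_right _ _).mul_left s)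
    exact Nat.eq_one_of_dvd_coprimes h hg (Nat.gcd_dvd_right _ _)

theorem eq_of_pow_eq_of_pow_eq_one {G₀ : Type*} [CommGroupWithZero G₀] {a b : G₀} {n r : ℕ}
    (hb : b ≠ 0) (hab : a ^ n = b ^ n) (ha : a ^ r = 1) (hb' : b ^ r = 1) (h : n.Coprime r) :
    a = b := by
  rw [← div_eq_one_iff_eq hb, ← pow_eq_one_iff_of_coprime h, div_pow, div_pow, hab, ha, hb',
    div_self (pow_ne_zero _ hb)]
  exact ⟨rfl, div_one 1⟩

def IsCompletePermutation {R : Type*} [Add R] (f : R → R) : Prop :=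
  Bijective f ∧ Bijective fun x => f x + x

section FiniteField

variable {F : Type*} [Field F] [Fintype F]

theorem FiniteField.pow_injective_of_coprime {d : ℕ} (hd0 : d ≠ 0)
    (hd : d.Coprime (Fintype.card F - 1)) : Injective fun x : F => x ^ d := by
  intro x y hxy
  simp only at hxy
  rcases eq_or_ne y 0 with rfl | hy
  · exact pow_eq_zero_iff hd0 |>.1 (by simpa [zero_pow hd0] using hxy)
  have hx : x ≠ 0 := by
    rintro rfl
    exact hy (pow_eq_zero_iff hd0 |>.1 (by simpa [zero_pow hd0] using hxy.symm))
  exact eq_of_pow_eq_of_pow_eq_one hy hxy (FiniteField.pow_card_sub_one_eq_one x hx)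
    (FiniteField.pow_card_sub_one_eq_one y hy) hd

theorem pow_sub_one_pow_add_one {q : ℕ} (hcard : Fintype.card F = q ^ 2) {x : F} (hx : x ≠ 0) :
    (x ^ (q - 1)) ^ (q + 1) = 1 := by
  rw [← pow_mul, ← FiniteField.pow_card_sub_one_eq_one x hx, hcard,
    show q ^ 2 - 1 = (q - 1) * (q + 1) by rw [mul_comm, ← Nat.sq_sub_sq, one_pow]]

variable {p : ℕ} [ExpChar F p] {k : ℕ}

theorem frobenius_pow_add_mul (hcard : Fintype.card F = (p ^ k) ^ 2) {u : F}
    (hu : u ^ (p ^ k + 1) = 1) (s : ℕ) {x : F} (hx : x ≠ 0) :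
    (x ^ (s * (p ^ k - 1) + 1) + u * x) ^ p ^ k * u * (x ^ (p ^ k - 1)) ^ s =
      (x ^ (s * (p ^ k - 1) + 1) + u * x) * x ^ (p ^ k - 1) := by
  set q := p ^ k
  set z := x ^ (q - 1)
  have hz : z ^ (q + 1) = 1 := pow_sub_one_pow_add_one hcard hx
  have hz0 : z ≠ 0 := pow_ne_zero _ hx
  have hu0 : u ≠ 0 := by rintro rfl; simp at hu
  have hzq : z ^ q = z⁻¹ := eq_inv_of_mul_eq_one_left (by rw [← pow_succ, hz])
  have huq : u ^ q = u⁻¹ := eq_inv_of_mul_eq_one_left (by rw [← pow_succ, hu])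
  have hxq : x ^ q = x * z := by
    rw [← pow_succ', Nat.sub_add_cancel (Nat.one_le_pow _ _ (expChar_pos F p))]
  have hxd : x ^ (s * (q - 1) + 1) + u * x = x * (z ^ s + u) := by
    rw [pow_succ', pow_mul']; ring
  rw [hxd, mul_pow, add_pow_expChar_pow, pow_right_comm, hxq, hzq, huq, inv_pow]
  field_simp
  ring

theorem injective_pow_add_mul (hcard : Fintype.card F = (p ^ k) ^ 2) {u : F}
    (hu : u ^ (p ^ k + 1) = 1) {s : ℕ} (hs : s ≠ 0)
    (havoid : ∀ z : F, z ^ (p ^ k + 1) = 1 → z ^ s + u ≠ 0) (hcop : (s - 1).Coprime (p ^ k + 1)) :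
    Injective fun x : F => x ^ (s * (p ^ k - 1) + 1) + u * x := by
  set q := p ^ k
  have factor (x : F) : x ^ (s * (q - 1) + 1) + u * x = x * ((x ^ (q - 1)) ^ s + u) := by
    rw [pow_succ', pow_mul']; ring
  have ne_zero {x : F} (hx : x ≠ 0) : x ^ (s * (q - 1) + 1) + u * x ≠ 0 := by
    rw [factor]
    exact mul_ne_zero hx (havoid _ (pow_sub_one_pow_add_one hcard hx))
  have hu0 : u ≠ 0 := by rintro rfl; simp at hu
  obtain ⟨t, rfl⟩ := Nat.exists_eq_add_one_of_ne_zero hs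
  rw [Nat.add_sub_cancel] at hcop
  -- with `z = x^(q-1)`, the value of `x^d + u x` determines `z^t`
  have key {x : F} (hx : x ≠ 0) :
      (x ^ ((t + 1) * (q - 1) + 1) + u * x) ^ q * u * (x ^ (q - 1)) ^ t =
        x ^ ((t + 1) * (q - 1) + 1) + u * x := by
    have := frobenius_pow_add_mul hcard hu (t + 1) hx
    rw [pow_succ (x ^ (p ^ k - 1)) t, ← mul_assoc] at this
    exact mul_right_cancel₀ (pow_ne_zero _ hx) this
  intro x y hxy
  simp only at hxy
  rcases eq_or_ne x 0 with rfl | hx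
  · by_contra hy
    exact ne_zero (Ne.symm hy) (by simpa using hxy.symm)
  rcases eq_or_ne y 0 with rfl | hy
  · by_contra hx'
    exact ne_zero hx (by simpa using hxy)
  have hz : x ^ (q - 1) = y ^ (q - 1) := by
    refine eq_of_pow_eq_of_pow_eq_one (pow_ne_zero _ hy) ?_ (pow_sub_one_pow_add_one hcard hx)
      (pow_sub_one_pow_add_one hcard hy) hcop
    have hg : (y ^ ((t + 1) * (q - 1) + 1) + u * y) ^ q * u ≠ 0 :=
      mul_ne_zero (pow_ne_zero _ (ne_zero hy)) hu0
    refine mul_left_cancel₀ hg ?_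
    rw [key hy, ← hxy, key hx]
  rw [factor, factor, hz] at hxy
  exact mul_right_cancel₀ (havoid _ (pow_sub_one_pow_add_one hcard hy)) hxy

theorem isCompletePermutation_inv_mul_pow (hcard : Fintype.card F = (p ^ k) ^ 2) {u : F}
    (hu : u ^ (p ^ k + 1) = 1) {s : ℕ} (hs : s ≠ 0)
    (havoid : ∀ z : F, z ^ (p ^ k + 1) = 1 → z ^ s + u ≠ 0)
    (hcop : (2 * s - 1).Coprime (p ^ k + 1)) (hcop' : (s - 1).Coprime (p ^ k + 1)) :
    IsCompletePermutation fun x : F => u⁻¹ * x ^ (s * (p ^ k - 1) + 1) := by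
  have hu0 : u ≠ 0 := by rintro rfl; simp at hu
  have hq : p ^ k ≠ 0 := pow_ne_zero _ (expChar_pos F p).ne'
  refine ⟨Finite.injective_iff_bijective.1 ?_, Finite.injective_iff_bijective.1 ?_⟩
  · refine (mul_right_injective₀ (inv_ne_zero hu0)).comp
      (FiniteField.pow_injective_of_coprime (Nat.succ_ne_zero _) ?_)
    rw [hcard]
    exact coprime_mul_sub_one_add_one_sq_sub_one hs hq hcop
  · have h : (fun x : F => u⁻¹ * x ^ (s * (p ^ k - 1) + 1) + x) =
        fun x => u⁻¹ * (x ^ (s * (p ^ k - 1) + 1) + u * x) := by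
      funext x; field_simp
    rw [h]
    exact (mul_right_injective₀ (inv_ne_zero hu0)).comp (injective_pow_add_mul hcard hu hs havoid hcop')

end FiniteField

/-- For odd `m` with `5 ∤ m`, `n = 2m`, `d = 6(2^m - 1) + 1`: the arithmetic conditions
`gcd(d, 2^n-1) = 1`, `gcd(6, 2^m+1) = 3`, `gcd(5, 2^m+1) = 1` hold, and consequently for
every `u ∈ U \ U³` the map `x ↦ u⁻¹ x^d` is a complete permutation of `𝔽_{2^n}`. -/
theorem complete_permutation_s_six (n m : ℕ) (hm : Odd m) (h5 : ¬ (5 ∣ m)) (hn : n = 2 * m)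
    (d : ℕ) (hd : d = 6 * (2 ^ m - 1) + 1)
    (F : Type*) [Field F] [Fintype F] (hcard : Fintype.card F = 2 ^ n) :
    Nat.gcd d (2 ^ n - 1) = 1 ∧
    Nat.gcd 6 (2 ^ m + 1) = 3 ∧
    Nat.gcd 5 (2 ^ m + 1) = 1 ∧
    ∀ u : F, u ^ (2 ^ m + 1) = 1 → (¬ ∃ v : F, v ^ (2 ^ m + 1) = 1 ∧ u = v ^ 3) →
      Function.Bijective (fun x : F => u⁻¹ * x ^ d) ∧
      Function.Bijective (fun x : F => u⁻¹ * x ^ d + x) := by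
  subst hn hd
  rw [pow_mul'] at hcard ⊢
  have h5' : Nat.Coprime 5 (2 ^ m + 1) :=
    (Nat.Prime.coprime_iff_not_dvd Nat.prime_five).2 (not_five_dvd_two_pow_add_one hm)
  have h11 : Nat.Coprime 11 (2 ^ m + 1) :=
    (Nat.Prime.coprime_iff_not_dvd (by norm_num)).2 (not_eleven_dvd_two_pow_add_one hm h5)
  refine ⟨coprime_mul_sub_one_add_one_sq_sub_one (by norm_num) (by positivity) h11,
    gcd_six_two_pow_add_one hm, h5', fun u hu hu3 => ?_⟩
  have hcard2 : Even (Fintype.card F) := by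
    rw [hcard]
    exact (even_two.pow_of_ne_zero hm.pos.ne').pow_of_ne_zero two_ne_zero
  have : CharP F 2 := ringChar.of_eq (FiniteField.even_card_iff_char_two.2 (Nat.even_iff.1 hcard2))
  -- in characteristic 2, `z^6 + u = 0` would make `u = (z^2)^3` a cube in `U`
  refine isCompletePermutation_inv_mul_pow (p := 2) hcard hu (by norm_num) (fun z hz h0 => hu3
    ⟨z ^ 2, by rw [← pow_mul, mul_comm, pow_mul, hz, one_pow], ?_⟩) h11 h5'
  rw [← pow_mul, CharTwo.add_eq_zero.1 h0]
end

section
/- Let m and k be odd positive integers with t = gcd(m, k), n = 2m, s = 2^k + 1, and d = s(2^m - 1) + 1. Then gcd(d, 2^n - 1) = 1, gcd(s, 2^m + 1) = 2^t + 1 > 1, and gcd(s - 1, 2^m + 1) = 1. -/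
/-!
Every common divisor `e` of `2 ^ a + 1` and `2 ^ b + 1` divides `2 ^ (2 gcd(a, b)) - 1`. For odd
`a, b` it is prime to `2 ^ gcd(a, b) - 1` (which divides `2 ^ b - 1`, and `e` is odd), hence divides
`2 ^ gcd(a, b) + 1`; conversely `2 ^ g + 1 ∣ 2 ^ a + 1` whenever `a / g` is odd. For `a` even and
`b` odd, `2 gcd(a, b) ∣ a`, so `e` divides both `2 ^ a ± 1` and is `1`. Finally
`d = s (2 ^ m + 1) - (2 ^ (k + 1) + 1)`, so `d` is prime to `2 ^ m + 1` by the even case with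
`a = k + 1`, and `d ≡ 1` modulo `2 ^ m - 1`.
-/

namespace Nat

lemma pow_sub_one_mul_pow_add_one (x c : ℕ) : (x ^ c - 1) * (x ^ c + 1) = x ^ (2 * c) - 1 := by
  rw [mul_comm, ← Nat.sq_sub_sq, one_pow, ← pow_mul, mul_comm]

lemma dvd_two_of_dvd_add_one_of_dvd_sub_one {e x : ℕ} (h₁ : e ∣ x + 1) (h₂ : e ∣ x - 1) :
    e ∣ 2 := by
  rcases x with _ | x
  · exact (Nat.dvd_one.mp h₁) ▸ one_dvd 2
  · have h := Nat.dvd_sub h₁ h₂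
    rwa [show x + 1 + 1 - (x + 1 - 1) = 2 by omega] at h

lemma coprime_two_two_pow_add_one {b : ℕ} (hb : b ≠ 0) : Coprime 2 (2 ^ b + 1) :=
  coprime_two_left.mpr ((Nat.even_pow' hb).mpr even_two).add_one

lemma eq_one_of_dvd_two_of_dvd_two_pow_add_one {e b : ℕ} (hb : b ≠ 0) (h₁ : e ∣ 2)
    (h₂ : e ∣ 2 ^ b + 1) : e = 1 :=
  Nat.eq_one_of_dvd_coprimes (coprime_two_two_pow_add_one hb) h₁ h₂

lemma pow_add_one_dvd_pow_add_one_s17 {x g a : ℕ} (hga : g ∣ a) (ha : Odd a) :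
    x ^ g + 1 ∣ x ^ a + 1 := by
  obtain ⟨q, rfl⟩ := hga
  simpa [pow_mul] using (Nat.Odd.of_mul_right ha).nat_add_dvd_pow_add_pow (x ^ g) 1

lemma dvd_pow_two_mul_gcd_sub_one {e x a b : ℕ} (ha : e ∣ x ^ a + 1) (hb : e ∣ x ^ b + 1) :
    e ∣ x ^ (2 * gcd a b) - 1 := by
  have ha' : e ∣ x ^ (2 * a) - 1 := ha.trans (Dvd.intro_left _ (pow_sub_one_mul_pow_add_one x a))
  have hb' : e ∣ x ^ (2 * b) - 1 := hb.trans (Dvd.intro_left _ (pow_sub_one_mul_pow_add_one x b))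
  simpa [Nat.gcd_mul_left] using Nat.dvd_gcd ha' hb'

theorem gcd_two_pow_add_one_two_pow_add_one_of_odd {a b : ℕ} (ha : Odd a) (hb : Odd b) :
    gcd (2 ^ a + 1) (2 ^ b + 1) = 2 ^ gcd a b + 1 := by
  set G := gcd (2 ^ a + 1) (2 ^ b + 1)
  set g := gcd a b
  have hGb : G ∣ 2 ^ b + 1 := gcd_dvd_right _ _
  have hcop : Coprime G (2 ^ g - 1) := by
    have h₁ : gcd G (2 ^ g - 1) ∣ 2 ^ b + 1 := (gcd_dvd_left _ _).trans hGb
    have h₂ : gcd G (2 ^ g - 1) ∣ 2 ^ b - 1 :=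
      (gcd_dvd_right _ _).trans (pow_sub_one_dvd_pow_sub_one 2 (gcd_dvd_right a b))
    exact eq_one_of_dvd_two_of_dvd_two_pow_add_one hb.pos.ne'
      (dvd_two_of_dvd_add_one_of_dvd_sub_one h₁ h₂) h₁
  have hG : G ∣ (2 ^ g - 1) * (2 ^ g + 1) := by
    rw [pow_sub_one_mul_pow_add_one]
    exact dvd_pow_two_mul_gcd_sub_one (gcd_dvd_left _ _) hGb
  exact Nat.dvd_antisymm (hcop.dvd_of_dvd_mul_left hG)
    (Nat.dvd_gcd (pow_add_one_dvd_pow_add_one_s17 (gcd_dvd_left a b) ha)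
      (pow_add_one_dvd_pow_add_one_s17 (gcd_dvd_right a b) hb))

theorem coprime_two_pow_add_one_two_pow_add_one_of_even_of_odd {a b : ℕ} (ha : Even a)
    (hb : Odd b) : Coprime (2 ^ a + 1) (2 ^ b + 1) := by
  set G := gcd (2 ^ a + 1) (2 ^ b + 1)
  have hGa : G ∣ 2 ^ a + 1 := gcd_dvd_left _ _
  have hGb : G ∣ 2 ^ b + 1 := gcd_dvd_right _ _
  -- `gcd a b` is odd and divides the even `a`, so a common divisor also divides `2 ^ a - 1`.
  have htwo_gcd : 2 * gcd a b ∣ a :=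
    (coprime_two_left.mpr (hb.of_dvd_nat (gcd_dvd_right a b))).mul_dvd_of_dvd_of_dvd
      ha.two_dvd (gcd_dvd_left a b)
  have hGa' : G ∣ 2 ^ a - 1 :=
    (dvd_pow_two_mul_gcd_sub_one hGa hGb).trans (pow_sub_one_dvd_pow_sub_one 2 htwo_gcd)
  exact eq_one_of_dvd_two_of_dvd_two_pow_add_one hb.pos.ne'
    (dvd_two_of_dvd_add_one_of_dvd_sub_one hGa hGa') hGb

lemma coprime_succ_mul_sub_one_add_one_sq_sub_one {r y : ℕ} (h : Coprime (2 * r + 1) (y + 1)) :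
    Coprime ((r + 1) * (y - 1) + 1) (y ^ 2 - 1) := by
  rcases Nat.eq_zero_or_pos y with rfl | hy
  · simp
  have hminus : Coprime ((r + 1) * (y - 1) + 1) (y - 1) :=
    (coprime_mul_right_add_left 1 (y - 1) (r + 1)).mpr (coprime_one_left _)
  have hplus : Coprime ((r + 1) * (y - 1) + 1) (y + 1) := by
    have key : (((r + 1) * (y - 1) + 1 : ℕ) : ℤ) =
        -((2 * r + 1 : ℕ) : ℤ) + (r + 1) * (y + 1 : ℕ) := by
      push_cast [Nat.cast_sub hy]
      ring
    rw [← isCoprime_iff_coprime, key]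
    exact (isCoprime_iff_coprime.mpr h).neg_left.add_mul_right_left _
  rw [← one_pow 2, Nat.sq_sub_sq, one_pow]
  exact hplus.mul_right hminus

end Nat

theorem cpp_conditions_s_two_pow_add_one_general (m k n t s d : ℕ)
    (hm : Odd m) (hk : Odd k)
    (ht : t = Nat.gcd m k) (hn : n = 2 * m)
    (hs : s = 2 ^ k + 1) (hd : d = s * (2 ^ m - 1) + 1) :
    Nat.gcd d (2 ^ n - 1) = 1 ∧
    Nat.gcd s (2 ^ m + 1) = 2 ^ t + 1 ∧ 1 < Nat.gcd s (2 ^ m + 1) ∧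
    Nat.gcd (s - 1) (2 ^ m + 1) = 1 := by
  subst hn hs hd ht
  have hgcd : Nat.gcd (2 ^ k + 1) (2 ^ m + 1) = 2 ^ Nat.gcd m k + 1 := by
    rw [Nat.gcd_two_pow_add_one_two_pow_add_one_of_odd hk hm, Nat.gcd_comm]
  refine ⟨?_, hgcd, hgcd ▸ Nat.lt_add_of_pos_left (Nat.two_pow_pos _), ?_⟩
  · have hcop := Nat.coprime_two_pow_add_one_two_pow_add_one_of_even_of_odd hk.add_one hm
    rw [_root_.pow_succ'] at hcop
    have hd := Nat.coprime_succ_mul_sub_one_add_one_sq_sub_one hcop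
    rwa [← pow_mul, mul_comm m 2] at hd
  · simpa using (Nat.coprime_two_two_pow_add_one hm.pos.ne').pow_left k

/-- For odd positive `m, k` with `t = gcd(m,k)`, `s = 2^k + 1` and `d = s(2^m - 1) + 1`:
`gcd(d, 2^{2m} - 1) = 1`, `gcd(s, 2^m + 1) = 2^t + 1 > 1`, and `gcd(s-1, 2^m+1) = 1`. -/
theorem cpp_conditions_s_two_pow_add_one (m k n t s d : ℕ)
    (hm : Odd m) (hk : Odd k) (hm0 : 0 < m) (hk0 : 0 < k)
    (ht : t = Nat.gcd m k) (hn : n = 2 * m)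
    (hs : s = 2 ^ k + 1) (hd : d = s * (2 ^ m - 1) + 1) :
    Nat.gcd d (2 ^ n - 1) = 1 ∧
    Nat.gcd s (2 ^ m + 1) = 2 ^ t + 1 ∧ 1 < Nat.gcd s (2 ^ m + 1) ∧
    Nat.gcd (s - 1) (2 ^ m + 1) = 1 :=
  cpp_conditions_s_two_pow_add_one_general m k n t s d hm hk ht hn hs hd
end

section
/- Let n = 2m, and for i = 1, ..., t let d_i = s_i(2^m - 1) + e with gcd(d_1, 2^n - 1) = 1. For w_2, ..., w_t ∈ F_{2^n}, the character sum Σ_{x ∈ F_{2^n}} (-1)^{Tr(x^{d_1} + Σ_{i=2}^t w_i x^{d_i})} equals (N - 1)·2^m, where N is the number of λ in the unit circle U = {λ : λ^(2^m+1) = 1} satisfying λ^{d_1} + Σ_{i=2}^t w_i λ^{d_i} + (λ^{d_1} + Σ_{i=2}^t w_i λ^{d_i})^{2^m} = 0. -/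
/-!
Write `q = 2 ^ m`, so that `|F| = q²` and `Fˣ = U × V` with `U` the unit circle (order `q + 1`)
and `V = 𝔽_qˣ` (order `q - 1`); the two orders are coprime. The trace factors as
`Tr_n z = Tr_m (z + z ^ q)`, and for `f = x ^ d₁ + ∑ wᵢ x ^ dᵢ` the congruences `dᵢ ≡ e` give
`f (u v) = v ^ e f u` on `U × V`. Hence `c u := f u + f u ^ q` lies in `𝔽_q` and
`∑_{x ≠ 0} (-1)^{Tr_n f x} = ∑_{u ∈ U} ∑_{v ∈ V} (-1)^{Tr_m (c u · v ^ e)}`. Since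
`gcd (e, q - 1) = 1`, `v ↦ c u · v ^ e` permutes `V` when `c u ≠ 0`, and the inner sum is the
sum of the character `(-1)^{Tr_m}` over `𝔽_qˣ`, namely `-1` (the character is nontrivial since
`Tr_m` has degree `2 ^ (m - 1) < q`); when `c u = 0` it is `q - 1`. Counting gives `1 + N (q - 1) - (q + 1 - N) = (N - 1) q`.
-/

open Finset

section RootsOfUnity

variable {F : Type*} [Field F] [Fintype F]

lemma pos_of_dvd_card_sub_one {k : ℕ} (hk : k ∣ Fintype.card F - 1) : 0 < k :=
  Nat.pos_of_dvd_of_pos hk (Nat.sub_pos_of_lt Fintype.one_lt_card)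

variable [DecidableEq F]

lemma card_filter_pow_eq_one {k : ℕ} (hk : k ∣ Fintype.card F - 1) :
    #{x : F | x ^ k = 1} = k := by
  obtain ⟨c, hc⟩ := hk
  obtain ⟨g, hg⟩ := IsCyclic.exists_ofOrder_eq_natCard (α := Fˣ)
  have hg : IsPrimitiveRoot (g : F) (k * c) := by
    rw [← hc, ← Fintype.card_units, ← Nat.card_eq_fintype_card, ← hg, ← orderOf_units]
    exact IsPrimitiveRoot.orderOf _
  have hc0 : 0 < c := pos_of_dvd_card_sub_one ⟨k, hc.trans (mul_comm k c)⟩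
  have hroot := hg.pow_of_dvd hc0.ne' (dvd_mul_left c k)
  rw [Nat.mul_div_cancel _ hc0] at hroot
  convert hroot.card_nthRootsFinset using 2
  ext x
  simp [Polynomial.mem_nthRootsFinset (pos_of_dvd_card_sub_one ⟨c, hc⟩)]

lemma filter_pow_eq_self_eq_insert_zero {k : ℕ} (hk : 0 < k) :
    ({x : F | x ^ k = x} : Finset F) = insert 0 ({x : F | x ^ (k - 1) = 1} : Finset F) := by
  ext x
  obtain ⟨k, rfl⟩ := Nat.exists_eq_add_of_lt hk
  rcases eq_or_ne x 0 with rfl | hx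
  · simp
  · simp [pow_succ, mul_eq_right₀ hx, hx]

lemma sum_erase_zero_eq_sum_mul {M : Type*} [AddCommMonoid M] {a b : ℕ} (hab : a.Coprime b)
    (hcard : a * b = Fintype.card F - 1) (g : F → M) :
    ∑ x ∈ univ.erase 0, g x =
      ∑ u ∈ {x : F | x ^ a = 1}, ∑ v ∈ {x : F | x ^ b = 1}, g (u * v) := by
  have ha := (pos_of_dvd_card_sub_one ⟨b, hcard.symm⟩).ne'
  have hb := (pos_of_dvd_card_sub_one ⟨a, hcard.symm.trans (mul_comm a b)⟩).ne'
  set S := ({x : F | x ^ a = 1} : Finset F) ×ˢ ({x : F | x ^ b = 1} : Finset F)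
  have hmem : ∀ p ∈ S, p.1 * p.2 ∈ univ.erase 0 := by
    simp only [S, mem_product, mem_filter_univ, mem_erase, mem_univ, and_true]
    exact fun p hp ↦ mul_ne_zero (IsUnit.of_pow_eq_one hp.1 ha).ne_zero
      (IsUnit.of_pow_eq_one hp.2 hb).ne_zero
  have hinj : Set.InjOn (fun p : F × F ↦ p.1 * p.2) S := by
    rintro ⟨u₁, v₁⟩ h₁ ⟨u₂, v₂⟩ h₂ (h : u₁ * v₁ = u₂ * v₂)
    simp only [S, coe_product, Set.mem_prod, coe_filter_univ, Set.mem_ofPred_eq] at h₁ h₂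
    have hu₁ := (IsUnit.of_pow_eq_one h₁.1 ha).ne_zero
    have hu₂ := (IsUnit.of_pow_eq_one h₂.1 ha).ne_zero
    have hratio : u₁ / u₂ = v₂ / v₁ := by
      field_simp [hu₂, (IsUnit.of_pow_eq_one h₁.2 hb).ne_zero]
      linear_combination h
    have hu : u₁ / u₂ = 1 := (pow_eq_one_iff_of_coprime hab).1
      ⟨by rw [div_pow, h₁.1, h₂.1, div_one], by rw [hratio, div_pow, h₁.2, h₂.2, div_one]⟩
    obtain rfl : u₁ = u₂ := (div_eq_one_iff_eq hu₂).1 hu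
    simp [mul_left_cancel₀ hu₁ h]
  have hsurj : Set.SurjOn (fun p : F × F ↦ p.1 * p.2) S (univ.erase 0 : Finset F) :=
    surjOn_of_injOn_of_card_le _ hmem hinj (by
      rw [card_erase_of_mem (mem_univ _), card_univ, card_product,
        card_filter_pow_eq_one ⟨b, hcard.symm⟩,
        card_filter_pow_eq_one ⟨a, hcard.symm.trans (mul_comm a b)⟩, hcard])
  rw [← sum_product']
  exact (sum_nbij _ hmem hinj hsurj fun _ _ ↦ rfl).symm

end RootsOfUnity

section AbsTrace

variable {R : Type*} [CommRing R]

/-- On `𝔽_{2^m}` this is the absolute trace; elsewhere it is just the polynomial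
`∑_{j < m} X ^ 2 ^ j`. -/
def absTrace (m : ℕ) (y : R) : R := ∑ j ∈ range m, y ^ 2 ^ j

def traceChar [DecidableEq R] (m : ℕ) (y : R) : ℤ := if absTrace m y = 0 then 1 else -1

@[simp]
lemma absTrace_zero (m : ℕ) : absTrace m (0 : R) = 0 := by
  simp [absTrace]

@[simp]
lemma absTrace_one_left (y : R) : absTrace 1 y = y := by
  simp [absTrace]

@[simp]
lemma traceChar_zero [DecidableEq R] (m : ℕ) : traceChar m (0 : R) = 1 := by
  simp [traceChar]

lemma absTrace_add_left (k m : ℕ) (y : R) :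
    absTrace (k + m) y = absTrace k y + absTrace m (y ^ 2 ^ k) := by
  simp only [absTrace, sum_range_add, pow_add, pow_mul]

variable [CharP R 2]

lemma absTrace_add (m : ℕ) (a b : R) : absTrace m (a + b) = absTrace m a + absTrace m b := by
  simp only [absTrace, add_pow_char_pow, sum_add_distrib]

lemma absTrace_sq (m : ℕ) (y : R) : absTrace m (y ^ 2) = absTrace m y ^ 2 := by
  simp only [absTrace, sum_pow_char, ← pow_mul, mul_comm]

lemma absTrace_two_mul (m : ℕ) (y : R) : absTrace (2 * m) y = absTrace m (y + y ^ 2 ^ m) := by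
  rw [two_mul, absTrace_add_left, absTrace_add]

lemma absTrace_sq_add_self (m : ℕ) (y : R) :
    absTrace m y ^ 2 + y = absTrace m y + y ^ 2 ^ m := by
  have h := absTrace_add_left 1 m y
  rw [add_comm 1 m, absTrace_add_left, absTrace_one_left, absTrace_one_left, pow_one,
    absTrace_sq] at h
  rw [h, add_comm]

lemma absTrace_eq_zero_or_eq_one [IsDomain R] {m : ℕ} {y : R} (hy : y ^ 2 ^ m = y) :
    absTrace m y = 0 ∨ absTrace m y = 1 := by
  rw [← IsIdempotentElem.iff_eq_zero_or_one, IsIdempotentElem, ← sq]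
  simpa [hy] using absTrace_sq_add_self m y

lemma traceChar_add_of_absTrace_eq_one [IsDomain R] [DecidableEq R] {m : ℕ} {y z : R}
    (hy : y ^ 2 ^ m = y) (hz : absTrace m z = 1) : traceChar m (y + z) = -traceChar m y := by
  rcases absTrace_eq_zero_or_eq_one hy with h | h <;>
    simp [traceChar, absTrace_add, h, hz, CharTwo.add_self_eq_zero]

end AbsTrace

open Polynomial in
lemma card_filter_absTrace_eq_zero_le {F : Type*} [Field F] [Fintype F] [DecidableEq F]
    (m : ℕ) : #{y : F | absTrace (m + 1) y = 0} ≤ 2 ^ m := by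
  set P : F[X] := X ^ 2 ^ m + ∑ j ∈ range m, X ^ 2 ^ j
  have hlow : (∑ j ∈ range m, X ^ 2 ^ j : F[X]).degree < (2 ^ m : ℕ) :=
    (degree_sum_le _ _).trans_lt <| (Finset.sup_lt_iff (WithBot.bot_lt_coe _)).2 fun j hj ↦ by
      rw [degree_X_pow]
      exact WithBot.coe_lt_coe.2 (Nat.pow_lt_pow_right one_lt_two (mem_range.1 hj))
  have hP : P.Monic := monic_X_pow_add hlow
  have hdeg : P.natDegree = 2 ^ m := by
    rw [natDegree_add_eq_left_of_degree_lt (by rwa [degree_X_pow]), natDegree_X_pow]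
  have heval (y : F) : P.eval y = absTrace (m + 1) y := by
    simp [P, absTrace, sum_range_succ, eval_finsetSum, add_comm]
  calc #{y : F | absTrace (m + 1) y = 0} ≤ P.natDegree :=
        card_le_degree_of_subset_roots fun y hy ↦ by
          rw [mem_roots hP.ne_zero, IsRoot, heval]
          simpa using hy
    _ = 2 ^ m := hdeg

section TraceSums

variable {F : Type*} [Field F] [Fintype F] [DecidableEq F] {m : ℕ}

lemma card_filter_pow_two_pow_eq_self (hq : 2 ^ m - 1 ∣ Fintype.card F - 1) :
    #{y : F | y ^ 2 ^ m = y} = 2 ^ m := by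
  rw [filter_pow_eq_self_eq_insert_zero (Nat.two_pow_pos m), card_insert_of_notMem (by
    simp [zero_pow (pos_of_dvd_card_sub_one hq).ne']), card_filter_pow_eq_one hq,
    Nat.sub_add_cancel Nat.one_le_two_pow]

variable [CharP F 2]

lemma sum_traceChar_filter_pow_two_pow_eq_self (hq : 2 ^ m - 1 ∣ Fintype.card F - 1) :
    ∑ y ∈ {y : F | y ^ 2 ^ m = y}, traceChar m y = 0 := by
  obtain _ | k := m
  · exact absurd (pos_of_dvd_card_sub_one hq) (by simp)
  obtain ⟨y₀, hy₀, hy₀T⟩ : ∃ y₀ ∈ ({y : F | y ^ 2 ^ (k + 1) = y} : Finset F),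
      absTrace (k + 1) y₀ ≠ 0 := by
    by_contra! h
    have hle := (card_le_card fun y hy ↦ (mem_filter_univ _).2 (h y hy)).trans
      (card_filter_absTrace_eq_zero_le (F := F) k)
    rw [card_filter_pow_two_pow_eq_self hq, pow_succ] at hle
    have := Nat.two_pow_pos k
    omega
  rw [mem_filter_univ] at hy₀
  have hy₀T : absTrace (k + 1) y₀ = 1 := (absTrace_eq_zero_or_eq_one hy₀).resolve_left hy₀T
  -- `y ↦ y + y₀` is a fixed-point-free involution of `𝔽_q` flipping the sign of each term
  refine sum_involution (fun y _ ↦ y + y₀) (fun y hy ↦ ?_) (fun y _ _ h ↦ ?_) (fun y hy ↦ ?_)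
    fun y _ ↦ by simp [add_assoc, CharTwo.add_self_eq_zero]
  · rw [mem_filter_univ] at hy
    rw [traceChar_add_of_absTrace_eq_one hy hy₀T, add_neg_cancel]
  · simp [add_eq_left.1 h] at hy₀T
  · rw [mem_filter_univ] at hy ⊢
    rw [add_pow_char_pow, hy, hy₀]

lemma sum_traceChar_filter_pow_eq_one (hq : 2 ^ m - 1 ∣ Fintype.card F - 1) :
    ∑ v ∈ {v : F | v ^ (2 ^ m - 1) = 1}, traceChar m v = -1 := by
  have h := sum_traceChar_filter_pow_two_pow_eq_self hq
  rw [filter_pow_eq_self_eq_insert_zero (Nat.two_pow_pos m), sum_insert (by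
    simp [zero_pow (pos_of_dvd_card_sub_one hq).ne']), traceChar_zero] at h
  linarith

lemma sum_traceChar_mul_pow (hq : 2 ^ m - 1 ∣ Fintype.card F - 1) {e : ℕ}
    (he : e.Coprime (2 ^ m - 1)) {c : F} (hc : c ^ 2 ^ m = c) :
    ∑ v ∈ {v : F | v ^ (2 ^ m - 1) = 1}, traceChar m (c * v ^ e) =
      if c = 0 then 2 ^ m - 1 else -1 := by
  split_ifs with hc0
  · simp [hc0, card_filter_pow_eq_one hq, Nat.cast_sub Nat.one_le_two_pow]
  rw [← sum_traceChar_filter_pow_eq_one hq]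
  have hc1 : c ^ (2 ^ m - 1) = 1 := by
    rw [← mul_eq_right₀ hc0, ← pow_succ, Nat.sub_add_cancel Nat.one_le_two_pow, hc]
  set V := ({v : F | v ^ (2 ^ m - 1) = 1} : Finset F)
  have hmaps : ∀ v ∈ V, c * v ^ e ∈ V := fun v hv ↦ by
    rw [mem_filter_univ] at hv ⊢
    rw [mul_pow, hc1, pow_right_comm, hv, one_pow, one_mul]
  have hinj : Set.InjOn (fun v ↦ c * v ^ e) V := fun v₁ h₁ v₂ h₂ h ↦ by
    simp only [V, coe_filter_univ, Set.mem_ofPred_eq] at h₁ h₂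
    have hv₂ := (IsUnit.of_pow_eq_one h₂ (pos_of_dvd_card_sub_one hq).ne').ne_zero
    have hpow : v₁ ^ e = v₂ ^ e := mul_left_cancel₀ hc0 h
    refine (div_eq_one_iff_eq hv₂).1 ((pow_eq_one_iff_of_coprime he).1 ⟨?_, ?_⟩)
    · rw [div_pow, hpow, div_self (pow_ne_zero _ hv₂)]
    · rw [div_pow, h₁, h₂, div_one]
  exact sum_nbij _ hmaps hinj (surjOn_of_injOn_of_card_le _ hmaps hinj le_rfl) fun _ _ ↦ rfl

end TraceSums

lemma coprime_two_pow_add_one_two_pow_sub_one {m : ℕ} (hm : m ≠ 0) :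
    (2 ^ m + 1).Coprime (2 ^ m - 1) := by
  have h2 : 2 ∣ 2 ^ m := dvd_pow_self 2 hm
  have hsum : 2 ^ m + 1 = 2 + (2 ^ m - 1) * 1 := by
    have := Nat.one_le_two_pow (n := m)
    omega
  rw [hsum, Nat.coprime_add_mul_left_left, Nat.coprime_two_left, Nat.odd_iff]
  omega

lemma mul_pow_mul_add_of_pow_eq_one {M : Type*} [CommMonoid M] {k : ℕ} {v : M} (hv : v ^ k = 1)
    (x : M) (s e : ℕ) : (x * v) ^ (s * k + e) = v ^ e * x ^ (s * k + e) := by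
  rw [mul_pow, pow_add v, pow_mul', hv, one_pow, one_mul, mul_comm]

theorem sum_traceChar_eq_of_niho {F : Type*} [Field F] [Fintype F] [DecidableEq F] [CharP F 2]
    {m e : ℕ} (hF : Fintype.card F = 2 ^ (2 * m)) (he : e.Coprime (2 ^ m - 1)) (f : F → F)
    (hf0 : f 0 = 0) (hf : ∀ x v, v ^ (2 ^ m - 1) = 1 → f (x * v) = v ^ e * f x) :
    ∑ x, traceChar (2 * m) (f x) =
      ((#{u : F | u ^ (2 ^ m + 1) = 1 ∧ f u + f u ^ 2 ^ m = 0} : ℤ) - 1) * 2 ^ m := by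
  have hcard : (2 ^ m + 1) * (2 ^ m - 1) = Fintype.card F - 1 := by
    rw [hF, pow_mul', sq, ← Nat.mul_self_sub_mul_self_eq, one_mul]
  have hq : 2 ^ m - 1 ∣ Fintype.card F - 1 := ⟨2 ^ m + 1, by rw [← hcard, mul_comm]⟩
  have hm : m ≠ 0 := by
    rintro rfl
    simpa using pos_of_dvd_card_sub_one hq
  set c : F → F := fun x ↦ f x + f x ^ 2 ^ m with hc
  have hc_fixed (x : F) : c x ^ 2 ^ m = c x := by
    rw [hc, add_pow_char_pow, ← pow_mul, ← pow_add, ← two_mul, ← hF, FiniteField.pow_card,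
      add_comm]
  have hc_mul (x v : F) (hv : v ^ (2 ^ m - 1) = 1) : c (x * v) = c x * v ^ e := by
    have hve : (v ^ e) ^ 2 ^ m = v ^ e := by
      rw [pow_right_comm, ← Nat.sub_add_cancel Nat.one_le_two_pow, pow_succ, hv, one_mul]
    simp only [hc, hf x v hv, mul_pow, hve]
    ring
  calc ∑ x, traceChar (2 * m) (f x)
      = ∑ x, traceChar m (c x) := by simp only [traceChar, absTrace_two_mul, hc]
    _ = 1 + ∑ u ∈ {u : F | u ^ (2 ^ m + 1) = 1}, ∑ v ∈ {v : F | v ^ (2 ^ m - 1) = 1},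
          traceChar m (c u * v ^ e) := by
        rw [← add_sum_erase _ _ (mem_univ 0),
          sum_erase_zero_eq_sum_mul (coprime_two_pow_add_one_two_pow_sub_one hm) hcard]
        simp only [hc, hf0, zero_pow (Nat.two_pow_pos m).ne', add_zero, traceChar_zero]
        refine congrArg _ (sum_congr rfl fun u _ ↦ sum_congr rfl fun v hv ↦ ?_)
        rw [mem_filter_univ] at hv
        exact congrArg (traceChar m) (hc_mul u v hv)
    _ = 1 + ∑ u ∈ {u : F | u ^ (2 ^ m + 1) = 1},
          (2 ^ m * (if c u = 0 then 1 else 0) - 1 : ℤ) := by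
        refine congrArg _ (sum_congr rfl fun u _ ↦ ?_)
        rw [sum_traceChar_mul_pow hq he (hc_fixed u)]
        split_ifs <;> ring
    _ = _ := by
        rw [sum_sub_distrib, ← mul_sum, sum_boole, sum_const,
          card_filter_pow_eq_one ⟨_, hcard.symm⟩, filter_filter]
        ring

theorem niho_exponential_sum_general (n m : ℕ) (hn : n = 2 * m)
    (F : Type*) [Field F] [Fintype F] [DecidableEq F] (hcard : Fintype.card F = 2 ^ n)
    (ι : Type*) [Fintype ι] (w : ι → F)
    (s₁ : ℕ) (s : ι → ℕ) (e : ℕ) (he : 0 < e)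
    (d₁ : ℕ) (hd₁ : d₁ = s₁ * (2 ^ m - 1) + e)
    (d : ι → ℕ) (hd : ∀ i, d i = s i * (2 ^ m - 1) + e)
    (hgcd : Nat.gcd d₁ (2 ^ n - 1) = 1) :
    ∑ x : F,
        (if (∑ j ∈ Finset.range n, (x ^ d₁ + ∑ i, w i * x ^ d i) ^ 2 ^ j) = 0
          then (1 : ℤ) else -1)
      = (((Finset.univ.filter (fun lam : F => lam ^ (2 ^ m + 1) = 1 ∧
            (lam ^ d₁ + ∑ i, w i * lam ^ d i) +
              (lam ^ d₁ + ∑ i, w i * lam ^ d i) ^ 2 ^ m = 0)).card : ℤ) - 1) * 2 ^ m := by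
  subst hn hd₁
  have : CharP F 2 := charP_of_card_eq_prime_pow hcard
  have hcop : e.Coprime (2 ^ m - 1) := by
    rw [← Nat.coprime_mul_right_add_left _ _ s₁]
    exact Nat.Coprime.coprime_dvd_right (Nat.pow_sub_one_dvd_pow_sub_one 2 (dvd_mul_left m 2)) hgcd
  refine sum_traceChar_eq_of_niho hcard hcop
    (fun x ↦ x ^ (s₁ * (2 ^ m - 1) + e) + ∑ i, w i * x ^ d i) ?_ ?_
  · simp [hd, he.ne']
  · intro x v hv
    simp only [hd, mul_pow_mul_add_of_pow_eq_one hv, mul_add, mul_sum, mul_left_comm]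

/-- Niho-type exponential sum lemma: with `n = 2m`, `d₁ = s₁(2^m-1)+e`, `dᵢ = sᵢ(2^m-1)+e`,
`gcd(d₁, 2^n-1) = 1`, and `wᵢ ∈ 𝔽_{2^n}`, the character sum
`∑_x (-1)^{Tr(x^{d₁} + ∑ᵢ wᵢ x^{dᵢ})}` equals `(N - 1)·2^m`, where `N` counts the `λ` in the
unit circle `U = {λ : λ^(2^m+1) = 1}` with
`λ^{d₁} + ∑ᵢ wᵢ λ^{dᵢ} + (λ^{d₁} + ∑ᵢ wᵢ λ^{dᵢ})^{2^m} = 0`.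
`Tr` is the absolute trace `x ↦ ∑_{j<n} x^{2^j}` with values in `𝔽_2 ⊆ F`. -/
theorem niho_exponential_sum (n m : ℕ) (hm : 0 < m) (hn : n = 2 * m)
    (F : Type*) [Field F] [Fintype F] [DecidableEq F] (hcard : Fintype.card F = 2 ^ n)
    (ι : Type*) [Fintype ι] (w : ι → F)
    (s₁ : ℕ) (s : ι → ℕ) (e : ℕ) (he : 0 < e)
    (d₁ : ℕ) (hd₁ : d₁ = s₁ * (2 ^ m - 1) + e)
    (d : ι → ℕ) (hd : ∀ i, d i = s i * (2 ^ m - 1) + e)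
    (hgcd : Nat.gcd d₁ (2 ^ n - 1) = 1) :
    ∑ x : F,
        (if (∑ j ∈ Finset.range n, (x ^ d₁ + ∑ i, w i * x ^ d i) ^ 2 ^ j) = 0
          then (1 : ℤ) else -1)
      = (((Finset.univ.filter (fun lam : F => lam ^ (2 ^ m + 1) = 1 ∧
            (lam ^ d₁ + ∑ i, w i * lam ^ d i) +
              (lam ^ d₁ + ∑ i, w i * lam ^ d i) ^ 2 ^ m = 0)).card : ℤ) - 1) * 2 ^ m :=
  niho_exponential_sum_general n m hn F hcard ι w s₁ s e he d₁ hd₁ d hd hgcd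
end
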